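/- For every L > 0 there exists ε > 0 such that the following holds: for every c ∈ [−L, L] and every h* with 1/L ≤ h* ≤ L, set J = −c·h* + h*²/2; then every 2π-periodic C³ function h : ℝ → ℝ with h(θ) > 0 for all θ, satisfying −c·h(θ) + h(θ)²/2 + h(θ)³·(h'(θ) + h'''(θ)) = J for all θ ∈ ℝ and |h(θ) − h*| ≤ ε for all θ, is a constant function, and its constant value x satisfies −c·x + x²/2 = J and |x − h*| ≤ ε. -/

import Mathlib

/-!
Dividing by `h³`, the profile equation says `h' + h''' = V'(h)` for an explicit potential `V`, so
`(V(h) - h' h'')' = h'² - h''²` and periodicity gives `∫ h'² = ∫ h''²` over a period. In Fourier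
variables (Parseval) this reads `∑ |ĉₙ|² = ∑ n² |ĉₙ|²` for the coefficients of `h'`, whose mean is
zero; hence only the frequencies `±1` survive and `h''' = -h'`. The equation then collapses to
`-c h + h²/2 = J`, so the continuous function `h` takes at most two values and is constant.
-/

open Real Function MeasureTheory AddCircle

theorem Function.Periodic.periodic_deriv {𝕜 F : Type*} [NontriviallyNormedField 𝕜]
    [NormedAddCommGroup F] [NormedSpace 𝕜 F] {f : 𝕜 → F} {T : 𝕜} (hf : Periodic f T) :
    Periodic (deriv f) T := by
  intro x
  rw [← deriv_comp_add_const, funext hf]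

section Fourier

variable {T : ℝ} {F G : ℝ → ℂ}

theorem Function.Periodic.continuous_lift (hF : Periodic F T) (hFc : Continuous F) :
    Continuous (hF.lift : AddCircle T → ℂ) :=
  continuous_coinduced_dom.mpr hFc

def Function.Periodic.liftContinuousMap (hF : Periodic F T) (hFc : Continuous F) :
    C(AddCircle T, ℂ) :=
  ⟨hF.lift, hF.continuous_lift hFc⟩

@[simp]
theorem Function.Periodic.coe_liftContinuousMap (hF : Periodic F T) (hFc : Continuous F) :
    ⇑(hF.liftContinuousMap hFc) = hF.lift :=
  rfl

variable [Fact (0 < T)]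

theorem Function.Periodic.fourierCoeff_lift (hF : Periodic F T) (n : ℤ) :
    fourierCoeff hF.lift n = (1 / T) • ∫ x in (0 : ℝ)..T, fourier (-n) (x : AddCircle T) • F x := by
  rw [fourierCoeff_eq_intervalIntegral _ n 0, zero_add]
  rfl

theorem Function.Periodic.fourierCoeff_lift_add (hF : Periodic F T) (hG : Periodic G T)
    (hFc : Continuous F) (hGc : Continuous G) :
    fourierCoeff (hF.add hG).lift = fourierCoeff hF.lift + fourierCoeff hG.lift := by
  rw [← fourierCoeff.add ((hF.continuous_lift hFc).integrable_of_hasCompactSupport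
    (.of_compactSpace _)) ((hG.continuous_lift hGc).integrable_of_hasCompactSupport
    (.of_compactSpace _))]
  congr 1
  funext x
  induction x using QuotientAddGroup.induction_on
  rfl

theorem Function.Periodic.fourierCoeff_lift_of_hasDerivAt {F' : ℝ → ℂ} (hF : Periodic F T)
    (hF' : Periodic F' T) (hderiv : ∀ x, HasDerivAt F (F' x) x) (hF'c : Continuous F') (n : ℤ) :
    fourierCoeff hF'.lift n = 2 * π * Complex.I * n / T * fourierCoeff hF.lift n := by
  have he : Continuous fun x : ℝ => fourier (-n) (x : AddCircle T) :=
    (map_continuous _).comp (continuous_quotient_mk')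
  rw [hF.fourierCoeff_lift, hF'.fourierCoeff_lift]
  simp only [smul_eq_mul]
  rw [intervalIntegral.integral_mul_deriv_eq_deriv_mul (fun x _ => hasDerivAt_fourier_neg T n x)
    (fun x _ => hderiv x) ((continuous_const.mul he).intervalIntegrable _ _)
    (hF'c.intervalIntegrable _ _)]
  have hT0 : ((T : ℝ) : AddCircle T) = ((0 : ℝ) : AddCircle T) := by simp
  have hFT : F T = F 0 := by simpa using hF 0
  simp only [hT0, hFT, sub_self, zero_sub, mul_assoc, intervalIntegral.integral_const_mul,
    Complex.real_smul]
  ring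

theorem Function.Periodic.hasSum_sq_fourierCoeff_lift (hF : Periodic F T) (hFc : Continuous F) :
    HasSum (fun n => ‖fourierCoeff hF.lift n‖ ^ 2) (T⁻¹ * ∫ x in (0 : ℝ)..T, ‖F x‖ ^ 2) := by
  set Φ := hF.liftContinuousMap hFc
  have h := hasSum_sq_fourierCoeff (Φ.toLp (E := ℂ) 2 haarAddCircle ℂ)
  have hΦ : ∫ t, ‖Φ.toLp (E := ℂ) 2 haarAddCircle ℂ t‖ ^ 2 ∂haarAddCircle
      = ∫ t, ‖Φ t‖ ^ 2 ∂haarAddCircle := by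
    refine integral_congr_ae ?_
    filter_upwards [Φ.coeFn_toLp (E := ℂ) (p := 2) (𝕜 := ℂ) haarAddCircle] with t ht
    rw [ht]
  rw [hΦ, integral_haarAddCircle, ← AddCircle.intervalIntegral_preimage T 0, zero_add] at h
  simpa only [fourierCoeff_toLp, Φ, coe_liftContinuousMap, Periodic.lift_coe, smul_eq_mul] using h

theorem Function.Periodic.eq_zero_of_fourierCoeff_lift_eq_zero (hF : Periodic F T)
    (hFc : Continuous F) (h : fourierCoeff hF.lift = 0) (x : ℝ) : F x = 0 := by
  have hs : Summable (fourierCoeff (hF.liftContinuousMap hFc)) := by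
    rw [coe_liftContinuousMap, h]
    exact summable_zero
  have := has_pointwise_sum_fourier_series_of_summable hs x
  simp only [coe_liftContinuousMap, h, Pi.zero_apply, zero_smul, Periodic.lift_coe] at this
  exact this.unique hasSum_zero

end Fourier

theorem intCast_sq_mul_eq_self_of_hasSum {c : ℤ → ℂ} {S : ℝ} (h0 : c 0 = 0)
    (hc : HasSum (fun n => ‖c n‖ ^ 2) S) (hnc : HasSum (fun n : ℤ => (n : ℝ) ^ 2 * ‖c n‖ ^ 2) S)
    (n : ℤ) : (n : ℂ) ^ 2 * c n = c n := by
  have hsum : HasSum (fun n : ℤ => ((n : ℝ) ^ 2 - 1) * ‖c n‖ ^ 2) 0 := by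
    simpa only [sub_mul, one_mul, sub_self] using hnc.sub hc
  have hnonneg : ∀ n : ℤ, 0 ≤ ((n : ℝ) ^ 2 - 1) * ‖c n‖ ^ 2 := by
    intro n
    rcases eq_or_ne n 0 with rfl | hn
    · simp [h0]
    · have : (1 : ℝ) ≤ (n : ℝ) ^ 2 := by
        exact_mod_cast one_le_sq_iff_one_le_abs _ |>.mpr (Int.one_le_abs hn)
      have := sq_nonneg ‖c n‖
      nlinarith
  rcases mul_eq_zero.mp (congrFun ((hasSum_zero_iff_of_nonneg hnonneg).mp hsum) n) with hn | hn
  · have : (n : ℂ) ^ 2 = 1 := by exact_mod_cast sub_eq_zero.mp hn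
    rw [this, one_mul]
  · rw [pow_eq_zero_iff two_ne_zero, norm_eq_zero] at hn
    rw [hn, mul_zero]

theorem Function.Periodic.second_deriv_eq_neg_of_integral_norm_sq_eq {F F' F'' : ℝ → ℂ}
    (hF : Periodic F (2 * π)) (hF' : ∀ x, HasDerivAt F (F' x) x)
    (hF'' : ∀ x, HasDerivAt F' (F'' x) x) (hF''c : Continuous F'')
    (hmean : ∫ x in (0 : ℝ)..2 * π, F x = 0)
    (hnorm : ∫ x in (0 : ℝ)..2 * π, ‖F x‖ ^ 2 = ∫ x in (0 : ℝ)..2 * π, ‖F' x‖ ^ 2) (x : ℝ) :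
    F'' x = -F x := by
  have : Fact (0 < 2 * π) := ⟨two_pi_pos⟩
  have hFc : Continuous F := continuous_iff_continuousAt.2 fun x => (hF' x).continuousAt
  have hF'c : Continuous F' := continuous_iff_continuousAt.2 fun x => (hF'' x).continuousAt
  have hper' : Periodic F' (2 * π) := fun x => by
    rw [← (hF' _).deriv, ← (hF' x).deriv]; exact hF.periodic_deriv x
  have hper'' : Periodic F'' (2 * π) := fun x => by
    rw [← (hF'' _).deriv, ← (hF'' x).deriv]; exact hper'.periodic_deriv x
  set c := fourierCoeff hF.lift
  have hcoeff_deriv : ∀ {G G' : ℝ → ℂ} (hG : Periodic G (2 * π)) (hG' : Periodic G' (2 * π)),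
      (∀ x, HasDerivAt G (G' x) x) → Continuous G' →
      ∀ n : ℤ, fourierCoeff hG'.lift n = Complex.I * n * fourierCoeff hG.lift n := by
    intro G G' hG hG' hderiv hG'c n
    rw [hG.fourierCoeff_lift_of_hasDerivAt hG' hderiv hG'c]
    field_simp
    push_cast
    ring
  have hc0 : c 0 = 0 := by
    simp [c, hF.fourierCoeff_lift, hmean]
  have hc : HasSum (fun n => ‖c n‖ ^ 2) ((2 * π)⁻¹ * ∫ x in (0 : ℝ)..2 * π, ‖F x‖ ^ 2) :=
    hF.hasSum_sq_fourierCoeff_lift hFc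
  have hnc : HasSum (fun n : ℤ => (n : ℝ) ^ 2 * ‖c n‖ ^ 2)
      ((2 * π)⁻¹ * ∫ x in (0 : ℝ)..2 * π, ‖F x‖ ^ 2) := by
    rw [hnorm]
    convert hper'.hasSum_sq_fourierCoeff_lift hF'c using 2 with n
    rw [hcoeff_deriv hF hper' hF' hF'c, norm_mul, norm_mul, Complex.norm_I, one_mul,
      Complex.norm_intCast, mul_pow, sq_abs]
  have hsum : fourierCoeff (hper''.add hF).lift = 0 := by
    rw [hper''.fourierCoeff_lift_add hF hF''c hFc]
    funext n
    rw [Pi.add_apply, hcoeff_deriv hper' hper'' hF'' hF''c, hcoeff_deriv hF hper' hF' hF'c,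
      Pi.zero_apply]
    linear_combination
      ((n : ℂ) ^ 2 * c n) * Complex.I_sq - intCast_sq_mul_eq_self_of_hasSum hc0 hc hnc n
  exact eq_neg_of_add_eq_zero_left ((hper''.add hF).eq_zero_of_fourierCoeff_lift_eq_zero
    (hF''c.add hFc) hsum x)

theorem Function.Periodic.deriv_deriv_eq_neg_of_integral_sq_eq {f : ℝ → ℝ}
    (hf : Periodic f (2 * π)) (hf2 : ContDiff ℝ 2 f) (hmean : ∫ x in (0 : ℝ)..2 * π, f x = 0)
    (hsq : ∫ x in (0 : ℝ)..2 * π, f x ^ 2 = ∫ x in (0 : ℝ)..2 * π, deriv f x ^ 2) (x : ℝ) :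
    deriv (deriv f) x = -f x := by
  have hf1 : ContDiff ℝ 1 (deriv f) := hf2.deriv'
  have key := Periodic.second_deriv_eq_neg_of_integral_norm_sq_eq (F := fun x => (f x : ℂ))
    (F' := fun x => ((deriv f x : ℝ) : ℂ)) (F'' := fun x => ((deriv (deriv f) x : ℝ) : ℂ))
    (fun x => by simp [hf x])
    (fun x => ((hf2.differentiable two_ne_zero) x).hasDerivAt.ofReal_comp)
    (fun x => ((hf1.differentiable one_ne_zero) x).hasDerivAt.ofReal_comp)
    (Complex.continuous_ofReal.comp (hf1.continuous_deriv le_rfl))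
    (by rw [intervalIntegral.integral_ofReal, hmean, Complex.ofReal_zero])
    (by simpa only [Complex.norm_real, Real.norm_eq_abs, sq_abs] using hsq) x
  exact_mod_cast key

theorem Function.Periodic.intervalIntegral_deriv_eq_zero {f : ℝ → ℝ} {T : ℝ}
    (hf : Periodic f T) (hf1 : ContDiff ℝ 1 f) : ∫ x in (0 : ℝ)..T, deriv f x = 0 := by
  rw [intervalIntegral.integral_deriv_eq_sub (fun x _ => hf1.differentiable one_ne_zero x)
    ((hf1.continuous_deriv le_rfl).intervalIntegrable _ _), sub_eq_zero]
  simpa using hf 0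

theorem Function.Periodic.integral_deriv_sq_eq_of_hasDerivAt {h V : ℝ → ℝ} {T : ℝ}
    (hper : Periodic h T) (hh : ContDiff ℝ 3 h)
    (hV : ∀ θ, HasDerivAt V (deriv h θ + deriv (deriv (deriv h)) θ) (h θ)) :
    ∫ θ in (0 : ℝ)..T, deriv h θ ^ 2 = ∫ θ in (0 : ℝ)..T, deriv (deriv h) θ ^ 2 := by
  have hh1 : ContDiff ℝ 2 (deriv h) := hh.deriv'
  have hh2 : ContDiff ℝ 1 (deriv (deriv h)) := hh1.deriv'
  set Ψ : ℝ → ℝ := fun θ => V (h θ) - deriv h θ * deriv (deriv h) θ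
  have hΨ : ∀ θ, HasDerivAt Ψ (deriv h θ ^ 2 - deriv (deriv h) θ ^ 2) θ := by
    intro θ
    refine (((hV θ).comp θ ((hh.differentiable (by norm_num)) θ).hasDerivAt).sub
      (((hh1.differentiable (by norm_num)) θ).hasDerivAt.mul
        ((hh2.differentiable one_ne_zero) θ).hasDerivAt)).congr_deriv ?_
    ring
  have hΨper : Periodic Ψ T := fun θ => by
    simp only [Ψ, hper θ, hper.periodic_deriv θ, hper.periodic_deriv.periodic_deriv θ]
  rw [← sub_eq_zero, ← intervalIntegral.integral_sub (f := fun θ => deriv h θ ^ 2)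
    (g := fun θ => deriv (deriv h) θ ^ 2) ((hh1.continuous.pow 2).intervalIntegrable _ _)
    ((hh2.continuous.pow 2).intervalIntegrable _ _),
    intervalIntegral.integral_eq_sub_of_hasDerivAt (fun θ _ => hΨ θ)
      (((hh1.continuous.pow 2).sub (hh2.continuous.pow 2)).intervalIntegrable _ _), sub_eq_zero]
  simpa using hΨper 0

-- Dividing the profile equation by `y ^ 3` turns `h' + h'''` into the derivative of this
-- potential along `h`.
theorem hasDerivAt_thinFilm_potential (c J : ℝ) {y : ℝ} (hy : y ≠ 0) :
    HasDerivAt (fun y => -J / 2 * (y ^ 2)⁻¹ - c * y⁻¹ - log y / 2)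
      ((J + c * y - y ^ 2 / 2) / y ^ 3) y := by
  have h1 := ((hasDerivAt_pow 2 y).inv (pow_ne_zero 2 hy)).const_mul (-J / 2)
  have h2 := (hasDerivAt_inv hy).const_mul c
  have h3 := (hasDerivAt_log hy).div_const 2
  refine ((h1.sub h2).sub h3).congr_deriv ?_
  field_simp
  ring

theorem Continuous.apply_eq_apply_of_forall_eq_or_eq {X Y : Type*} [TopologicalSpace X]
    [PreconnectedSpace X] [TopologicalSpace Y] [T1Space Y] {f : X → Y} (hf : Continuous f)
    {a b : Y} (hab : ∀ x, f x = a ∨ f x = b) (x y : X) : f x = f y :=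
  isPreconnected_univ.constant_of_mapsTo (Set.toFinite {a, b}).isDiscrete hf.continuousOn
    (fun x _ => hab x) (Set.mem_univ x) (Set.mem_univ y)

theorem stmt_6 (L : ℝ) :
    ∃ ε : ℝ, 0 < ε ∧
      ∀ c : ℝ, c ∈ Set.Icc (-L) L →
        ∀ hstar : ℝ, 1 / L ≤ hstar → hstar ≤ L →
          ∀ h : ℝ → ℝ, Function.Periodic h (2 * π) → ContDiff ℝ 3 h →
            (∀ θ, 0 < h θ) →
            (∀ θ, -c * h θ + (h θ) ^ 2 / 2
                + (h θ) ^ 3 * (deriv h θ + iteratedDeriv 3 h θ)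
                = -c * hstar + hstar ^ 2 / 2) →
            (∀ θ : ℝ, |h θ - hstar| ≤ ε) →
            ∃ x : ℝ, (∀ θ : ℝ, h θ = x) ∧
              -c * x + x ^ 2 / 2 = -c * hstar + hstar ^ 2 / 2 ∧
              |x - hstar| ≤ ε := by
  refine ⟨1, one_pos, fun c _ hstar _ _ h hper hh hpos hode hclose => ?_⟩
  set J := -c * hstar + hstar ^ 2 / 2 with hJ
  have hd3 : iteratedDeriv 3 h = deriv (deriv (deriv h)) := by
    simp only [iteratedDeriv_succ, iteratedDeriv_zero]
  simp only [hd3] at hode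
  have hV : ∀ θ, HasDerivAt (fun y => -J / 2 * (y ^ 2)⁻¹ - c * y⁻¹ - log y / 2)
      (deriv h θ + deriv (deriv (deriv h)) θ) (h θ) := fun θ => by
    convert hasDerivAt_thinFilm_potential c J (hpos θ).ne' using 1
    rw [eq_div_iff (pow_ne_zero 3 (hpos θ).ne')]
    linear_combination hode θ
  have hneg := hper.periodic_deriv.deriv_deriv_eq_neg_of_integral_sq_eq hh.deriv'
    (hper.intervalIntegral_deriv_eq_zero (hh.of_le (by norm_num)))
    (hper.integral_deriv_sq_eq_of_hasDerivAt hh hV)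
  have hroot : ∀ θ, -c * h θ + h θ ^ 2 / 2 = J := fun θ => by
    simpa [hneg] using hode θ
  have hvals : ∀ θ, h θ = hstar ∨ h θ = 2 * c - hstar := fun θ => by
    have hfac : (h θ - hstar) * (h θ - (2 * c - hstar)) = 0 := by
      linear_combination 2 * hroot θ + 2 * hJ
    rcases mul_eq_zero.mp hfac with hθ | hθ
    exacts [.inl (sub_eq_zero.mp hθ), .inr (sub_eq_zero.mp hθ)]
  have hconst := hh.continuous.apply_eq_apply_of_forall_eq_or_eq hvals
  exact ⟨h 0, fun θ => hconst θ 0, hroot 0, hclose 0⟩
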